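/- arXiv:math/0610256 — 2 statements merged into one kernel-verified Lean document; each statement's English description precedes it below -/
import Mathlib

section
/- Computational step of Lemma 3.1 (harmonic coordinate functions kill the contracted Christoffel symbols): let g be a Riemannian metric in local coordinates on an open set U ⊆ ℝⁿ and let φ : U → ℝⁿ, x ↦ x̄ = (x̄¹, …, x̄ⁿ), be a smooth diffeomorphism onto its image such that each component satisfies the elliptic equation −Σ_{k,l} g^{kl} ∂²x̄^i/∂x^k∂x^l + Σ_{k,l,j} g^{kl} Γ^j_{kl} ∂x̄^i/∂x^j = 0 on U. Then the transformed metric ḡ on φ(U), defined by ḡ_{ij}(x̄) = Σ_{m,n} g_{mn}(x)(∂x^m/∂x̄^i)(∂x^n/∂x̄^j) with x = φ^{−1}(x̄), satisfies Γ̄^k = Σ_{i,j} ḡ^{ij} Γ̄^k_{ij} = 0 everywhere on φ(U), for every k. -/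
/-!
The Christoffel symbols of `ḡ = (Dψ)ᵀ (g ∘ ψ) Dψ` obey the transformation law
`Γ̄^k_{ij} = ∂_cφ^k (Γ^c_{ab} ∂_iψ^a ∂_jψ^b + ∂_i∂_jψ^c)`, obtained from the product rule for `∂ḡ`
through the Christoffel symbols of the first kind. Differentiating `φ ∘ ψ = id` twice gives
`∂_cφ^k ∂_i∂_jψ^c = -∂_a∂_bφ^k ∂_iψ^a ∂_jψ^b`, and contracting with `ḡ^{ij} = ∂_aφ^i g^{ab} ∂_bφ^j`
turns `Γ̄^k` into `g^{ab} (Γ^c_{ab} ∂_cφ^k - ∂_a∂_bφ^k) = -Δ_g φ^k`, which vanishes by the harmonic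
equation.
-/

noncomputable section

open scoped BigOperators

/-- Partial derivative of a scalar function on `ℝⁿ` in the `i`-th coordinate direction. -/
def pd {n : ℕ} (i : Fin n) (f : (Fin n → ℝ) → ℝ) (x : Fin n → ℝ) : ℝ :=
  fderiv ℝ f x (Pi.single i 1)

/-- Christoffel symbols `Γ^k_{ij}` of a metric given in local coordinates. -/
def chris {n : ℕ} (g : (Fin n → ℝ) → Matrix (Fin n) (Fin n) ℝ) (k i j : Fin n)
    (x : Fin n → ℝ) : ℝ :=
  (1 / 2) * ∑ l, (g x)⁻¹ k l *
    (pd i (fun y => g y j l) x + pd j (fun y => g y i l) x - pd l (fun y => g y i j) x)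

/-- Curvature tensor `R^k_{ijl}`. -/
def riemUp {n : ℕ} (g : (Fin n → ℝ) → Matrix (Fin n) (Fin n) ℝ) (k i j l : Fin n)
    (x : Fin n → ℝ) : ℝ :=
  pd i (chris g k j l) x - pd j (chris g k i l) x +
    ∑ p, (chris g k i p x * chris g p j l x - chris g k j p x * chris g p i l x)

/-- Curvature tensor `R_{ijkl} = Σ_p g_{kp} R^p_{ijl}`. -/
def riem {n : ℕ} (g : (Fin n → ℝ) → Matrix (Fin n) (Fin n) ℝ) (i j k l : Fin n)
    (x : Fin n → ℝ) : ℝ :=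
  ∑ p, g x k p * riemUp g p i j l x

/-- Ricci tensor `R_{ik} = Σ_{j,l} g^{jl} R_{ijkl}`. -/
def ricci {n : ℕ} (g : (Fin n → ℝ) → Matrix (Fin n) (Fin n) ℝ) (i k : Fin n)
    (x : Fin n → ℝ) : ℝ :=
  ∑ j, ∑ l, (g x)⁻¹ j l * riem g i j k l x

/-- The transformed ("pulled back") metric `ḡ_{ij}(x̄) = Σ g_{mn}(ψ x̄) (∂ψ^m/∂x̄^i)(∂ψ^n/∂x̄^j)`,
where `ψ` is the inverse coordinate transformation. -/
def pullMetric {n : ℕ} (ψ : (Fin n → ℝ) → (Fin n → ℝ))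
    (g : (Fin n → ℝ) → Matrix (Fin n) (Fin n) ℝ) :
    (Fin n → ℝ) → Matrix (Fin n) (Fin n) ℝ :=
  fun z => Matrix.of fun i j =>
    ∑ a, ∑ b, g (ψ z) a b * pd i (fun w => ψ w a) z * pd j (fun w => ψ w b) z

open Filter Finset
open scoped Topology Matrix

section

variable {n : ℕ}

section PartialDerivative

lemma pd_congr {i : Fin n} {f f' : (Fin n → ℝ) → ℝ} {x : Fin n → ℝ} (h : f =ᶠ[𝓝 x] f') :
    pd i f x = pd i f' x := by
  rw [pd, pd, h.fderiv_eq]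

lemma pd_const (i : Fin n) (c : ℝ) (x : Fin n → ℝ) : pd i (fun _ => c) x = 0 := by
  simp [pd]

lemma pd_apply (i a : Fin n) (x : Fin n → ℝ) :
    pd i (fun w => w a) x = if a = i then 1 else 0 := by
  rw [pd, fderiv_apply differentiableAt_id]
  simp [Pi.single_apply]

lemma pd_sum {ι : Type*} {s : Finset ι} {i : Fin n} {f : ι → (Fin n → ℝ) → ℝ} {x : Fin n → ℝ}
    (hf : ∀ a ∈ s, DifferentiableAt ℝ (f a) x) :
    pd i (fun w => ∑ a ∈ s, f a w) x = ∑ a ∈ s, pd i (f a) x := by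
  simp [pd, fderiv_fun_sum hf]

lemma pd_mul {i : Fin n} {f f' : (Fin n → ℝ) → ℝ} {x : Fin n → ℝ}
    (hf : DifferentiableAt ℝ f x) (hf' : DifferentiableAt ℝ f' x) :
    pd i (fun w => f w * f' w) x = pd i f x * f' x + f x * pd i f' x := by
  simp only [pd, fderiv_fun_mul hf hf', add_apply, smul_apply, smul_eq_mul]
  ring

lemma fderiv_apply_eq_sum_pd (f : (Fin n → ℝ) → ℝ) (x v : Fin n → ℝ) :
    fderiv ℝ f x v = ∑ a, v a * pd a f x := by
  conv_lhs => rw [← univ_sum_single v]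
  rw [map_sum]
  refine Finset.sum_congr rfl fun a _ => ?_
  rw [pd, ← smul_eq_mul, ← ContinuousLinearMap.map_smul, ← Pi.single_smul', smul_eq_mul, mul_one]

lemma pd_comp {i : Fin n} {f : (Fin n → ℝ) → ℝ} {h : (Fin n → ℝ) → Fin n → ℝ} {x : Fin n → ℝ}
    (hf : DifferentiableAt ℝ f (h x)) (hh : DifferentiableAt ℝ h x) :
    pd i (fun w => f (h w)) x = ∑ a, pd a f (h x) * pd i (fun w => h w a) x := by
  rw [pd, fderiv_fun_comp x hf hh, ContinuousLinearMap.comp_apply, fderiv_apply_eq_sum_pd]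
  simp [pd, fderiv_apply hh, mul_comm]

lemma ContDiffAt.differentiableAt_pd {f : (Fin n → ℝ) → ℝ} {x : Fin n → ℝ}
    (hf : ContDiffAt ℝ 2 f x) (i : Fin n) : DifferentiableAt ℝ (pd i f) x :=
  ((hf.fderiv_right (m := 1) (by norm_num)).differentiableAt one_ne_zero).clm_apply
    (differentiableAt_const _)

lemma pd_pd_comm {f : (Fin n → ℝ) → ℝ} {x : Fin n → ℝ} (hf : ContDiffAt ℝ 2 f x) (i j : Fin n) :
    pd i (pd j f) x = pd j (pd i f) x := by
  have hd : DifferentiableAt ℝ (fderiv ℝ f) x :=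
    (hf.fderiv_right (m := 1) (by norm_num)).differentiableAt one_ne_zero
  have hpd : ∀ k, fderiv ℝ (pd k f) x = (fderiv ℝ (fderiv ℝ f) x).flip (Pi.single k 1) := by
    intro k
    rw [show pd k f = fun y => fderiv ℝ f y (Pi.single k 1) from rfl,
      fderiv_clm_apply hd (differentiableAt_const _)]
    simp
  simpa [pd, hpd] using hf.isSymmSndFDerivAt (by simp) (Pi.single i 1) (Pi.single j 1)

end PartialDerivative

section JacobianHessian

def jac (f : (Fin n → ℝ) → Fin n → ℝ) (x : Fin n → ℝ) : Matrix (Fin n) (Fin n) ℝ :=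
  Matrix.of fun a i => pd i (fun w => f w a) x

def hess (f : (Fin n → ℝ) → ℝ) (x : Fin n → ℝ) : Matrix (Fin n) (Fin n) ℝ :=
  Matrix.of fun i j => pd i (pd j f) x

variable {f : (Fin n → ℝ) → ℝ} {h : (Fin n → ℝ) → Fin n → ℝ} {x : Fin n → ℝ}

lemma jac_comp {F : (Fin n → ℝ) → Fin n → ℝ} (hF : DifferentiableAt ℝ F (h x))
    (hh : DifferentiableAt ℝ h x) : jac (fun w => F (h w)) x = jac F (h x) * jac h x := by
  ext a i
  exact pd_comp ((differentiableAt_apply a _).comp _ hF) hh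

lemma jac_eq_one_of_eventuallyEq_id (hh : h =ᶠ[𝓝 x] id) : jac h x = 1 := by
  ext a i
  rw [jac, Matrix.of_apply, pd_congr (f' := fun w => w a) (hh.mono fun y hy => congrFun hy a),
    pd_apply, Matrix.one_apply]

lemma hess_congr {f' : (Fin n → ℝ) → ℝ} (hf : f =ᶠ[𝓝 x] f') : hess f x = hess f' x := by
  ext i j
  exact pd_congr (hf.eventuallyEq_nhds.mono fun y hy => pd_congr hy)

lemma hess_apply_eq_zero (a : Fin n) : hess (fun w => w a) x = 0 := by
  ext i j
  rw [hess, Matrix.of_apply, show pd j (fun w : Fin n → ℝ => w a) = fun _ => if a = j then 1 else 0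
    from funext (pd_apply j a), pd_const, Matrix.zero_apply]

lemma hess_symm (hf : ContDiffAt ℝ 2 f x) (i j : Fin n) : hess f x i j = hess f x j i :=
  pd_pd_comm hf i j

lemma hess_comp (hf : ContDiffAt ℝ 2 f (h x)) (hh : ContDiffAt ℝ 2 h x) :
    hess (fun w => f (h w)) x
      = (jac h x)ᵀ * hess f (h x) * jac h x + ∑ a, pd a f (h x) • hess (fun w => h w a) x := by
  ext i j
  have hchain : pd j (fun w => f (h w)) =ᶠ[𝓝 x]
      fun w => ∑ a, pd a f (h w) * pd j (fun v => h v a) w := by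
    filter_upwards [hh.eventually (by simp), hh.continuousAt.eventually (hf.eventually (by simp))]
      with w hhw hfw
    exact pd_comp (hfw.differentiableAt two_ne_zero) (hhw.differentiableAt two_ne_zero)
  have hdf : ∀ a, DifferentiableAt ℝ (fun w => pd a f (h w)) x := fun a =>
    (hf.differentiableAt_pd a).comp x (hh.differentiableAt two_ne_zero)
  have hdh : ∀ a, DifferentiableAt ℝ (pd j fun v => h v a) x := fun a =>
    (contDiffAt_pi.1 hh a).differentiableAt_pd j
  rw [hess, Matrix.of_apply, pd_congr hchain, pd_sum fun a _ => (hdf a).fun_mul (hdh a)]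
  have hcomp : ∀ a, pd i (fun w => pd a f (h w)) x = ∑ b, hess f (h x) b a * jac h x b i :=
    fun a => pd_comp (hf.differentiableAt_pd a) (hh.differentiableAt two_ne_zero)
  simp only [pd_mul (hdf _) (hdh _), hcomp, sum_add_distrib, Matrix.add_apply, Matrix.mul_apply,
    Matrix.sum_apply, Matrix.smul_apply, Matrix.transpose_apply, sum_mul, smul_eq_mul, jac,
    Matrix.of_apply]
  congr 1
  exact Finset.sum_congr rfl fun _ _ => Finset.sum_congr rfl fun _ _ => by ring

end JacobianHessian

section MatrixPartialDerivative

variable {ι κ ν : Type*}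

def pdMat (i : Fin n) (M : (Fin n → ℝ) → Matrix ι κ ℝ) (x : Fin n → ℝ) : Matrix ι κ ℝ :=
  Matrix.of fun a b => pd i (fun y => M y a b) x

variable {i : Fin n} {x : Fin n → ℝ}

lemma pdMat_transpose (M : (Fin n → ℝ) → Matrix ι κ ℝ) :
    pdMat i (fun y => (M y)ᵀ) x = (pdMat i M x)ᵀ :=
  rfl

lemma differentiableAt_mul_apply [Fintype κ] {A : (Fin n → ℝ) → Matrix ι κ ℝ}
    {B : (Fin n → ℝ) → Matrix κ ν ℝ} (hA : ∀ a b, DifferentiableAt ℝ (fun y => A y a b) x)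
    (hB : ∀ a b, DifferentiableAt ℝ (fun y => B y a b) x) (a : ι) (c : ν) :
    DifferentiableAt ℝ (fun y => (A y * B y) a c) x := by
  simp only [Matrix.mul_apply]
  exact DifferentiableAt.fun_sum fun b _ => (hA a b).fun_mul (hB b c)

lemma pdMat_mul [Fintype κ] {A : (Fin n → ℝ) → Matrix ι κ ℝ} {B : (Fin n → ℝ) → Matrix κ ν ℝ}
    (hA : ∀ a b, DifferentiableAt ℝ (fun y => A y a b) x)
    (hB : ∀ a b, DifferentiableAt ℝ (fun y => B y a b) x) :
    pdMat i (fun y => A y * B y) x = pdMat i A x * B x + A x * pdMat i B x := by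
  ext a c
  simp only [pdMat, Matrix.of_apply, Matrix.mul_apply, Matrix.add_apply]
  rw [pd_sum fun b _ => (hA a b).fun_mul (hB b c), ← sum_add_distrib]
  exact Finset.sum_congr rfl fun b _ => pd_mul (hA a b) (hB b c)

lemma pdMat_comp {M : (Fin n → ℝ) → Matrix ι κ ℝ} {h : (Fin n → ℝ) → Fin n → ℝ}
    (hM : ∀ a b, DifferentiableAt ℝ (fun y => M y a b) (h x)) (hh : DifferentiableAt ℝ h x) :
    pdMat i (fun y => M (h y)) x = ∑ c, jac h x c i • pdMat c M (h x) := by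
  ext a b
  simp only [pdMat, Matrix.of_apply, Matrix.sum_apply, Matrix.smul_apply, smul_eq_mul,
    pd_comp (hM a b) hh, jac, mul_comm]

lemma pdMat_jac (h : (Fin n → ℝ) → Fin n → ℝ) (a j : Fin n) :
    pdMat i (jac h) x a j = hess (fun w => h w a) x i j :=
  rfl

end MatrixPartialDerivative

lemma pullMetric_eq_transpose_mul_mul (ψ : (Fin n → ℝ) → Fin n → ℝ)
    (g : (Fin n → ℝ) → Matrix (Fin n) (Fin n) ℝ) (z : Fin n → ℝ) :
    pullMetric ψ g z = (jac ψ z)ᵀ * g (ψ z) * jac ψ z := by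
  ext i j
  simp only [pullMetric, jac, Matrix.of_apply, Matrix.mul_apply, Matrix.transpose_apply, sum_mul]
  rw [sum_comm]
  exact Finset.sum_congr rfl fun _ _ => Finset.sum_congr rfl fun _ _ => by ring

section PullMetric

variable {ψ : (Fin n → ℝ) → Fin n → ℝ} {g : (Fin n → ℝ) → Matrix (Fin n) (Fin n) ℝ}
  {z : Fin n → ℝ}

lemma inv_pullMetric {K : Matrix (Fin n) (Fin n) ℝ} (hJK : jac ψ z * K = 1)
    (hdet : IsUnit (g (ψ z)).det) : (pullMetric ψ g z)⁻¹ = K * (g (ψ z))⁻¹ * Kᵀ := by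
  have hKJ : K * jac ψ z = 1 := mul_eq_one_comm.mp hJK
  rw [pullMetric_eq_transpose_mul_mul]
  apply Matrix.inv_eq_right_inv
  calc (jac ψ z)ᵀ * g (ψ z) * jac ψ z * (K * (g (ψ z))⁻¹ * Kᵀ)
      = (jac ψ z)ᵀ * (g (ψ z) * (jac ψ z * K) * (g (ψ z))⁻¹) * Kᵀ := by
        simp only [Matrix.mul_assoc]
    _ = (K * jac ψ z)ᵀ := by
        rw [hJK, Matrix.mul_one, Matrix.mul_nonsing_inv _ hdet, Matrix.mul_one,
          Matrix.transpose_mul]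
    _ = 1 := by rw [hKJ, Matrix.transpose_one]

lemma pdMat_pullMetric (hψ : ContDiffAt ℝ 2 ψ z)
    (hg : ∀ a b, DifferentiableAt ℝ (fun y => g y a b) (ψ z)) (i : Fin n) :
    pdMat i (pullMetric ψ g) z
      = (pdMat i (jac ψ) z)ᵀ * g (ψ z) * jac ψ z
        + (jac ψ z)ᵀ * (∑ c, jac ψ z c i • pdMat c g (ψ z)) * jac ψ z
        + (jac ψ z)ᵀ * g (ψ z) * pdMat i (jac ψ) z := by
  have hψ' : DifferentiableAt ℝ ψ z := hψ.differentiableAt two_ne_zero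
  have hJ : ∀ a b, DifferentiableAt ℝ (fun y => jac ψ y a b) z := fun a b =>
    (contDiffAt_pi.1 hψ a).differentiableAt_pd b
  have hJt : ∀ a b, DifferentiableAt ℝ (fun y => (jac ψ y)ᵀ a b) z := fun a b => hJ b a
  have hG : ∀ a b, DifferentiableAt ℝ (fun y => g (ψ y) a b) z := fun a b => (hg a b).comp z hψ'
  rw [funext (pullMetric_eq_transpose_mul_mul ψ g),
    pdMat_mul (differentiableAt_mul_apply hJt hG) hJ, pdMat_mul hJt hG, pdMat_transpose,
    pdMat_comp hg hψ']
  noncomm_ring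

end PullMetric

section TensorPullback

variable (J : Matrix (Fin n) (Fin n) ℝ) (T : Fin n → Fin n → Fin n → ℝ) (i j l : Fin n)

def pullback3 : ℝ := ∑ a, ∑ b, ∑ c, T a b c * J a i * J b j * J c l

lemma pullback3_swap : pullback3 J (fun a b c => T b a c) i j l = pullback3 J T j i l := by
  rw [pullback3, sum_comm]
  refine Finset.sum_congr rfl fun _ _ => Finset.sum_congr rfl fun _ _ =>
    Finset.sum_congr rfl fun _ _ => by ring

lemma pullback3_cycle : pullback3 J (fun a b c => T c a b) i j l = pullback3 J T l i j := by
  rw [pullback3, sum_comm_cycle]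
  refine Finset.sum_congr rfl fun _ _ => Finset.sum_congr rfl fun _ _ =>
    Finset.sum_congr rfl fun _ _ => by ring

lemma transpose_mul_sum_smul_mul_apply :
    (Jᵀ * (∑ c, J c i • Matrix.of (T c)) * J) j l = pullback3 J T i j l := by
  simp only [Matrix.mul_apply, Matrix.transpose_apply, Matrix.sum_apply, Matrix.smul_apply,
    Matrix.of_apply, smul_eq_mul, mul_sum, sum_mul]
  rw [← sum_comm_cycle]
  refine Finset.sum_congr rfl fun _ _ => Finset.sum_congr rfl fun _ _ =>
    Finset.sum_congr rfl fun _ _ => by ring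

lemma sum_mul_transpose_mul_mul_apply :
    ∑ m, J m l * (Jᵀ * Matrix.of (fun a b => T a b m) * J) i j = pullback3 J T i j l := by
  simp only [Matrix.mul_apply, Matrix.transpose_apply, Matrix.of_apply, mul_sum, sum_mul]
  rw [sum_comm_cycle]
  refine Finset.sum_congr rfl fun _ _ => (sum_comm).trans <| Finset.sum_congr rfl fun _ _ =>
    Finset.sum_congr rfl fun _ _ => by ring

end TensorPullback

/-- Christoffel symbols of the first kind `Γ_{lij}`. -/
def chrisLow (g : (Fin n → ℝ) → Matrix (Fin n) (Fin n) ℝ) (l i j : Fin n) (x : Fin n → ℝ) : ℝ :=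
  (1 / 2) * (pd i (fun y => g y j l) x + pd j (fun y => g y i l) x - pd l (fun y => g y i j) x)

lemma chris_eq_mulVec (g : (Fin n → ℝ) → Matrix (Fin n) (Fin n) ℝ) (k i j : Fin n)
    (x : Fin n → ℝ) : chris g k i j x = ((g x)⁻¹ *ᵥ fun l => chrisLow g l i j x) k := by
  simp only [chris, chrisLow, Matrix.mulVec, dotProduct, mul_sum]
  exact Finset.sum_congr rfl fun _ _ => by ring

lemma pullback3_chrisLow (J : Matrix (Fin n) (Fin n) ℝ) (D : Fin n → Fin n → Fin n → ℝ)
    (i j l : Fin n) :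
    pullback3 J (fun a b c => (1 / 2) * (D a b c + D b a c - D c a b)) i j l
      = (1 / 2) * (pullback3 J D i j l + pullback3 J D j i l - pullback3 J D l i j) := by
  rw [← pullback3_swap J D i j l, ← pullback3_cycle J D i j l]
  simp only [pullback3, ← sum_add_distrib, ← sum_sub_distrib, mul_sum]
  refine Finset.sum_congr rfl fun _ _ => Finset.sum_congr rfl fun _ _ =>
    Finset.sum_congr rfl fun _ _ => by ring

section Christoffel

variable {ψ : (Fin n → ℝ) → Fin n → ℝ} {g : (Fin n → ℝ) → Matrix (Fin n) (Fin n) ℝ}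
  {z : Fin n → ℝ}

lemma chrisLow_pullMetric (hψ : ContDiffAt ℝ 2 ψ z)
    (hg : ∀ a b, DifferentiableAt ℝ (fun y => g y a b) (ψ z)) (hsymm : (g (ψ z))ᵀ = g (ψ z))
    (i j : Fin n) :
    (fun l => chrisLow (pullMetric ψ g) l i j z)
      = (jac ψ z)ᵀ *ᵥ ((fun m => ((jac ψ z)ᵀ * Matrix.of (fun a b => chrisLow g m a b (ψ z))
          * jac ψ z) i j) + g (ψ z) *ᵥ fun c => hess (fun w => ψ w c) z i j) := by
  set J := jac ψ z
  set G := g (ψ z)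
  set D : Fin n → Fin n → Fin n → ℝ := fun c a b => pd c (fun y => g y a b) (ψ z)
  set Q : Fin n → Fin n → Fin n → ℝ := fun i p q => (Jᵀ * G * pdMat i (jac ψ) z) p q
  have hT : ∀ i j l, pd i (fun w => pullMetric ψ g w j l) z
      = Q i l j + pullback3 J D i j l + Q i j l := by
    intro i j l
    have hQt : (pdMat i (jac ψ) z)ᵀ * G * J = (Jᵀ * G * pdMat i (jac ψ) z)ᵀ := by
      rw [Matrix.transpose_mul, Matrix.transpose_mul, hsymm, Matrix.transpose_transpose,
        Matrix.mul_assoc]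
    rw [← transpose_mul_sum_smul_mul_apply, show pd i (fun w => pullMetric ψ g w j l) z
      = pdMat i (pullMetric ψ g) z j l from rfl, pdMat_pullMetric hψ hg i, hQt]
    rfl
  -- symmetry of the second derivatives of `ψ` collapses the six `Q`-terms of `Γ̄_{lij}` to one
  have hQ : ∀ i p q, Q i p q = Q q p i := by
    intro i p q
    simp only [Q, Matrix.mul_apply, pdMat_jac]
    exact Finset.sum_congr rfl fun m _ => by rw [hess_symm (contDiffAt_pi.1 hψ m)]
  have hΓ : ∀ l, ((Jᵀ *ᵥ fun m => (Jᵀ * Matrix.of (fun a b => chrisLow g m a b (ψ z)) * J) i j) l)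
      = (1 / 2) * (pullback3 J D i j l + pullback3 J D j i l - pullback3 J D l i j) := by
    intro l
    rw [← pullback3_chrisLow, ← sum_mul_transpose_mul_mul_apply]
    rfl
  have hS : ∀ l, (Jᵀ *ᵥ (G *ᵥ fun c => hess (fun w => ψ w c) z i j)) l = Q i l j := by
    intro l
    rw [Matrix.mulVec_mulVec]
    rfl
  ext l
  rw [Matrix.mulVec_add, Pi.add_apply, hΓ, hS, chrisLow, hT, hT, hT, hQ j l i, hQ l j i, hQ l i j]
  ring

lemma chris_pullMetric (hψ : ContDiffAt ℝ 2 ψ z)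
    (hg : ∀ a b, DifferentiableAt ℝ (fun y => g y a b) (ψ z)) (hsymm : (g (ψ z))ᵀ = g (ψ z))
    (hdet : IsUnit (g (ψ z)).det) {K : Matrix (Fin n) (Fin n) ℝ} (hJK : jac ψ z * K = 1)
    (k i j : Fin n) :
    chris (pullMetric ψ g) k i j z
      = ∑ c, K k c * (((jac ψ z)ᵀ * Matrix.of (fun a b => chris g c a b (ψ z)) * jac ψ z) i j
          + hess (fun w => ψ w c) z i j) := by
  have hΓ : ∀ c, ((g (ψ z))⁻¹ *ᵥ fun m =>
      ((jac ψ z)ᵀ * Matrix.of (fun a b => chrisLow g m a b (ψ z)) * jac ψ z) i j) c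
      = ((jac ψ z)ᵀ * Matrix.of (fun a b => chris g c a b (ψ z)) * jac ψ z) i j := by
    intro c
    have h : Matrix.of (fun a b => chris g c a b (ψ z))
        = ∑ m, (g (ψ z))⁻¹ c m • Matrix.of (fun a b => chrisLow g m a b (ψ z)) := by
      ext a b
      simp [chris_eq_mulVec, Matrix.mulVec, dotProduct, Matrix.sum_apply]
    simp only [h, Matrix.mul_sum, Matrix.sum_mul, Matrix.mul_smul, Matrix.smul_mul,
      Matrix.sum_apply, Matrix.smul_apply, smul_eq_mul, Matrix.mulVec, dotProduct]
  have hinv : (pullMetric ψ g z)⁻¹ * (jac ψ z)ᵀ = K * (g (ψ z))⁻¹ := by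
    rw [inv_pullMetric hJK hdet, Matrix.mul_assoc, ← Matrix.transpose_mul, hJK,
      Matrix.transpose_one, Matrix.mul_one]
  rw [chris_eq_mulVec, chrisLow_pullMetric hψ hg hsymm, Matrix.mulVec_mulVec, hinv,
    ← Matrix.mulVec_mulVec, Matrix.mulVec_add, Matrix.mulVec_mulVec,
    Matrix.nonsing_inv_mul _ hdet, Matrix.one_mulVec]
  simp only [← hΓ]
  rfl

lemma sum_jac_smul_hess_eq_neg_of_rightInverse {φ : (Fin n → ℝ) → Fin n → ℝ}
    (hright : ∀ᶠ w in 𝓝 z, φ (ψ w) = w) (hψ : ContDiffAt ℝ 2 ψ z) (hφ : ContDiffAt ℝ 2 φ (ψ z))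
    (k : Fin n) :
    ∑ c, jac φ (ψ z) k c • hess (fun w => ψ w c) z
      = -((jac ψ z)ᵀ * hess (fun y => φ y k) (ψ z) * jac ψ z) := by
  have h := hess_comp (contDiffAt_pi.1 hφ k) hψ
  rw [hess_congr (hright.mono fun w hw => congrFun hw k), hess_apply_eq_zero] at h
  rw [eq_neg_iff_add_eq_zero, add_comm]
  exact h.symm

end Christoffel

lemma sum_sum_mul_eq_trace {ι : Type*} [Fintype ι] (A B : Matrix ι ι ℝ) :
    ∑ i, ∑ j, A i j * B i j = (Aᵀ * B).trace := by
  simp only [Matrix.trace, Matrix.diag, Matrix.mul_apply, Matrix.transpose_apply]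
  exact sum_comm

lemma sum_sum_conj_mul_conj {ι : Type*} [Fintype ι] [DecidableEq ι] {J K : Matrix ι ι ℝ}
    (hJK : J * K = 1) (A M : Matrix ι ι ℝ) :
    ∑ i, ∑ j, (K * A * Kᵀ) i j * (Jᵀ * M * J) i j = ∑ a, ∑ b, A a b * M a b := by
  rw [sum_sum_mul_eq_trace, sum_sum_mul_eq_trace, ← Matrix.mul_assoc, Matrix.trace_mul_comm]
  simp only [Matrix.transpose_mul, Matrix.transpose_transpose, ← Matrix.mul_assoc, hJK,
    Matrix.one_mul]
  rw [Matrix.mul_assoc Aᵀ, ← Matrix.transpose_mul, hJK, Matrix.transpose_one, Matrix.mul_one]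

def laplacian (g : (Fin n → ℝ) → Matrix (Fin n) (Fin n) ℝ) (f : (Fin n → ℝ) → ℝ)
    (x : Fin n → ℝ) : ℝ :=
  ∑ a, ∑ b, (g x)⁻¹ a b * pd a (pd b f) x - ∑ a, ∑ b, ∑ c, (g x)⁻¹ a b * chris g c a b x * pd c f x

section Contracted

variable {φ ψ : (Fin n → ℝ) → Fin n → ℝ} {g : (Fin n → ℝ) → Matrix (Fin n) (Fin n) ℝ}
  {z : Fin n → ℝ}

lemma sum_inv_pullMetric_mul_chris_eq_neg_laplacian (hright : ∀ᶠ w in 𝓝 z, φ (ψ w) = w)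
    (hψ : ContDiffAt ℝ 2 ψ z) (hφ : ContDiffAt ℝ 2 φ (ψ z))
    (hg : ∀ a b, DifferentiableAt ℝ (fun y => g y a b) (ψ z)) (hsymm : (g (ψ z))ᵀ = g (ψ z))
    (hdet : IsUnit (g (ψ z)).det) (k : Fin n) :
    ∑ i, ∑ j, (pullMetric ψ g z)⁻¹ i j * chris (pullMetric ψ g) k i j z
      = -laplacian g (fun y => φ y k) (ψ z) := by
  have hJK : jac ψ z * jac φ (ψ z) = 1 := by
    rw [mul_eq_one_comm, ← jac_comp (hφ.differentiableAt two_ne_zero)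
      (hψ.differentiableAt two_ne_zero)]
    exact jac_eq_one_of_eventuallyEq_id hright
  have hchris : ∀ i j, chris (pullMetric ψ g) k i j z = ((jac ψ z)ᵀ
      * (∑ c, jac φ (ψ z) k c • Matrix.of (fun a b => chris g c a b (ψ z))
        - hess (fun y => φ y k) (ψ z)) * jac ψ z) i j := by
    intro i j
    have hS : ∑ c, jac φ (ψ z) k c * hess (fun w => ψ w c) z i j
        = -((jac ψ z)ᵀ * hess (fun y => φ y k) (ψ z) * jac ψ z) i j := by
      simpa [Matrix.sum_apply] using
        congrFun (congrFun (sum_jac_smul_hess_eq_neg_of_rightInverse hright hψ hφ k) i) j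
    rw [chris_pullMetric hψ hg hsymm hdet hJK, Matrix.mul_sub, Matrix.sub_mul, Matrix.sub_apply,
      sub_eq_add_neg]
    simp only [mul_add, sum_add_distrib, hS, Matrix.mul_sum, Matrix.sum_mul, Matrix.sum_apply,
      Matrix.mul_smul, Matrix.smul_mul, Matrix.smul_apply, smul_eq_mul]
  rw [inv_pullMetric hJK hdet, Finset.sum_congr rfl fun i _ => Finset.sum_congr rfl fun j _ =>
    congrArg _ (hchris i j), sum_sum_conj_mul_conj hJK, laplacian]
  simp [Matrix.sum_apply, jac, hess, mul_sub, mul_sum, mul_comm, mul_left_comm, mul_assoc]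

end Contracted

end

theorem harmonic_coordinates_kill_contracted_christoffel_general (n : ℕ)
    (U : Set (Fin n → ℝ)) (hU : IsOpen U)
    (g : (Fin n → ℝ) → Matrix (Fin n) (Fin n) ℝ)
    (hgsmooth : ∀ i j, ContDiffOn ℝ (⊤ : ℕ∞) (fun x => g x i j) U)
    (hgpos : ∀ x ∈ U, (g x).PosDef)
    (φ ψ : (Fin n → ℝ) → (Fin n → ℝ))
    (hφsmooth : ∀ i : Fin n, ContDiffOn ℝ (⊤ : ℕ∞) (fun x => φ x i) U)
    (hopen : IsOpen (φ '' U))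
    (hψsmooth : ∀ i : Fin n, ContDiffOn ℝ (⊤ : ℕ∞) (fun z => ψ z i) (φ '' U))
    (hleft : ∀ x ∈ U, ψ (φ x) = x)
    (hharmonic : ∀ x ∈ U, ∀ i : Fin n,
      -(∑ k, ∑ l, (g x)⁻¹ k l * pd k (fun w => pd l (fun v => φ v i) w) x)
        + ∑ k, ∑ l, ∑ j, (g x)⁻¹ k l * chris g j k l x * pd j (fun v => φ v i) x = 0) :
    ∀ z ∈ φ '' U, ∀ k : Fin n,
      ∑ i, ∑ j, (pullMetric ψ g z)⁻¹ i j * chris (pullMetric ψ g) k i j z = 0 := by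
  intro z hz k
  have hzU : φ '' U ∈ 𝓝 z := hopen.mem_nhds hz
  have hxU : ψ z ∈ U := by
    obtain ⟨y, hy, rfl⟩ := hz
    rwa [hleft y hy]
  have hright : ∀ᶠ w in 𝓝 z, φ (ψ w) = w := by
    filter_upwards [hzU]
    rintro _ ⟨y, hy, rfl⟩
    rw [hleft y hy]
  have htwo : (2 : WithTop ℕ∞) ≤ (⊤ : ℕ∞) := WithTop.coe_le_coe.mpr le_top
  have hψ : ContDiffAt ℝ 2 ψ z := contDiffAt_pi.2 fun c => ((hψsmooth c).contDiffAt hzU).of_le htwo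
  have hφ : ContDiffAt ℝ 2 φ (ψ z) :=
    contDiffAt_pi.2 fun c => ((hφsmooth c).contDiffAt (hU.mem_nhds hxU)).of_le htwo
  have hg : ∀ a b, DifferentiableAt ℝ (fun y => g y a b) (ψ z) := fun a b =>
    ((hgsmooth a b).contDiffAt (hU.mem_nhds hxU)).differentiableAt (by simp)
  rw [sum_inv_pullMetric_mul_chris_eq_neg_laplacian hright hψ hφ hg (hgpos _ hxU).isHermitian
    ((Matrix.isUnit_iff_isUnit_det _).mp (hgpos _ hxU).isUnit), laplacian, neg_sub,
    ← neg_add_eq_sub]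
  exact hharmonic _ hxU k

/-- **Computational step of Lemma 3.1**: if every component of the coordinate
transformation `φ` satisfies the elliptic equation
`-Σ g^{kl} ∂²x̄^i/∂x^k∂x^l + Σ g^{kl} Γ^j_{kl} ∂x̄^i/∂x^j = 0` on `U`, then the
transformed metric has vanishing contracted Christoffel symbols on `φ(U)`. -/
theorem harmonic_coordinates_kill_contracted_christoffel (n : ℕ) (hn : 2 ≤ n)
    (U : Set (Fin n → ℝ)) (hU : IsOpen U)
    (g : (Fin n → ℝ) → Matrix (Fin n) (Fin n) ℝ)
    (hgsmooth : ∀ i j, ContDiffOn ℝ (⊤ : ℕ∞) (fun x => g x i j) U)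
    (hgpos : ∀ x ∈ U, (g x).PosDef)
    (φ ψ : (Fin n → ℝ) → (Fin n → ℝ))
    (hφsmooth : ∀ i : Fin n, ContDiffOn ℝ (⊤ : ℕ∞) (fun x => φ x i) U)
    (hopen : IsOpen (φ '' U))
    (hψsmooth : ∀ i : Fin n, ContDiffOn ℝ (⊤ : ℕ∞) (fun z => ψ z i) (φ '' U))
    (hleft : ∀ x ∈ U, ψ (φ x) = x) (hright : ∀ z ∈ φ '' U, φ (ψ z) = z)
    (hharmonic : ∀ x ∈ U, ∀ i : Fin n,
      -(∑ k, ∑ l, (g x)⁻¹ k l * pd k (fun w => pd l (fun v => φ v i) w) x)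
        + ∑ k, ∑ l, ∑ j, (g x)⁻¹ k l * chris g j k l x * pd j (fun v => φ v i) x = 0) :
    ∀ z ∈ φ '' U, ∀ k : Fin n,
      ∑ i, ∑ j, (pullMetric ψ g z)⁻¹ i j * chris (pullMetric ψ g) k i j z = 0 :=
  harmonic_coordinates_kill_contracted_christoffel_general n U hU g hgsmooth hgpos φ ψ hφsmooth
    hopen hψsmooth hleft hharmonic
end
end

section
/- Symmetric hyperbolicity of the first-order reduction (system (3.9)): let n ≥ 2, N = n(n+1)/2, and let G = (g^{kl}) be a symmetric positive definite n×n real matrix. Define the square matrix A⁰ of size (n+2)N as the block matrix diag(I_N, (g^{kl} I_N)_{k,l=1,…,n}, I_N) (i.e. an I_N block, then an n×n grid of blocks whose (k,l) block is g^{kl} I_N, then an I_N block), and for each j = 1, …, n define the square matrix A^j of size (n+2)N whose only nonzero blocks are: the block in block-row k ∈ {2, …, n+1} (indexed by k = 1, …, n) and the last block-column, equal to g^{jk} I_N, and the block in the last block-row and block-column k, equal to g^{kj} I_N. Then A⁰ is symmetric and positive definite, and each A^j is symmetric. -/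
noncomputable section

open scoped BigOperators

/-- The coefficient matrix `A⁰ = diag(I_N, (g^{kl} I_N)_{k,l}, I_N)` of the first-order
reduction (3.9) of the hyperbolic geometric flow; the block index type
`Fin N ⊕ (Fin n × Fin N) ⊕ Fin N` realises the `(n+2)N × (n+2)N` block structure. -/
def hgfA0 (n N : ℕ) (G : Matrix (Fin n) (Fin n) ℝ) :
    Matrix (Fin N ⊕ Fin n × Fin N ⊕ Fin N) (Fin N ⊕ Fin n × Fin N ⊕ Fin N) ℝ :=
  Matrix.of fun r c =>
    match r, c with
    | Sum.inl a, Sum.inl b => if a = b then 1 else 0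
    | Sum.inr (Sum.inl (k, a)), Sum.inr (Sum.inl (l, b)) => G k l * (if a = b then 1 else 0)
    | Sum.inr (Sum.inr a), Sum.inr (Sum.inr b) => if a = b then 1 else 0
    | _, _ => 0

/-- The coefficient matrix `A^j` of the first-order reduction (3.9): its only nonzero
blocks are `g^{jk} I_N` in block-row `k` of the middle group and the last block-column,
and `g^{kj} I_N` in the last block-row and middle block-column `k`. -/
def hgfAj (n N : ℕ) (G : Matrix (Fin n) (Fin n) ℝ) (j : Fin n) :
    Matrix (Fin N ⊕ Fin n × Fin N ⊕ Fin N) (Fin N ⊕ Fin n × Fin N ⊕ Fin N) ℝ :=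
  Matrix.of fun r c =>
    match r, c with
    | Sum.inr (Sum.inl (k, a)), Sum.inr (Sum.inr b) => G j k * (if a = b then 1 else 0)
    | Sum.inr (Sum.inr a), Sum.inr (Sum.inl (k, b)) => G k j * (if a = b then 1 else 0)
    | _, _ => 0

/-! `A⁰` is block diagonal with diagonal blocks `I_N`, the Kronecker product `G ⊗ I_N`
(positive definite because `G` is), and `I_N`, hence positive definite; `A^j` is symmetric
because its two off-diagonal blocks are transposes of each other precisely when
`g^{jk} = g^{kj}`. -/

open Matrix
open scoped Kronecker ComplexOrder

theorem Matrix.PosDef.fromBlocks_zero {𝕜 m n : Type*} [RCLike 𝕜] [Fintype m] [Fintype n]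
    [DecidableEq m] [DecidableEq n] {A : Matrix m m 𝕜} {D : Matrix n n 𝕜}
    (hA : A.PosDef) (hD : D.PosDef) : (fromBlocks A 0 0 D).PosDef := by
  have : Invertible A := hA.isUnit.invertible
  have hsemi : (fromBlocks A 0 0 D).PosSemidef := by
    simpa using (PosDef.fromBlocks₁₁ 0 D hA).mpr (by simpa using hD.posSemidef)
  exact hsemi.posDef_iff_isUnit.mpr (isUnit_fromBlocks_zero₂₁.mpr ⟨hA.isUnit, hD.isUnit⟩)

theorem hgfA0_eq_fromBlocks (n N : ℕ) (G : Matrix (Fin n) (Fin n) ℝ) :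
    hgfA0 n N G = fromBlocks 1 0 0 (fromBlocks (G ⊗ₖ (1 : Matrix (Fin N) (Fin N) ℝ)) 0 0 1) := by
  ext (a | ⟨⟨k, a⟩ | a⟩) (b | ⟨⟨l, b⟩ | b⟩) <;> simp [hgfA0, one_apply]

theorem hgfA0_posDef (n N : ℕ) {G : Matrix (Fin n) (Fin n) ℝ} (hG : G.PosDef) :
    (hgfA0 n N G).PosDef := by
  rw [hgfA0_eq_fromBlocks]
  exact PosDef.one.fromBlocks_zero ((hG.kronecker PosDef.one).fromBlocks_zero PosDef.one)

theorem hgfAj_isSymm (n N : ℕ) {G : Matrix (Fin n) (Fin n) ℝ} (hG : G.IsSymm) (j : Fin n) :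
    (hgfAj n N G j).IsSymm := by
  ext (a | ⟨⟨k, a⟩ | a⟩) (b | ⟨⟨l, b⟩ | b⟩) <;>
    simp [hgfAj, transpose_apply, hG.apply, eq_comm]

theorem hgf_first_order_reduction_symmetric_hyperbolic_general (n : ℕ)
    (G : Matrix (Fin n) (Fin n) ℝ) (hGpos : G.PosDef) :
    (hgfA0 n (n * (n + 1) / 2) G).IsSymm ∧ (hgfA0 n (n * (n + 1) / 2) G).PosDef ∧
      ∀ j : Fin n, (hgfAj n (n * (n + 1) / 2) G j).IsSymm := by
  have hA0 := hgfA0_posDef n (n * (n + 1) / 2) hGpos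
  have hGsymm : G.IsSymm := isHermitian_iff_isSymm.mp hGpos.isHermitian
  exact ⟨isHermitian_iff_isSymm.mp hA0.isHermitian, hA0, hgfAj_isSymm n _ hGsymm⟩

/-- **Symmetric hyperbolicity of the first-order reduction** (system (3.9)): for a
symmetric positive definite matrix `G = (g^{kl})` and `N = n(n+1)/2`, the matrix `A⁰`
is symmetric positive definite and each `A^j` is symmetric. -/
theorem hgf_first_order_reduction_symmetric_hyperbolic (n : ℕ) (hn : 2 ≤ n)
    (G : Matrix (Fin n) (Fin n) ℝ) (hG : G.IsSymm) (hGpos : G.PosDef) :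
    (hgfA0 n (n * (n + 1) / 2) G).IsSymm ∧ (hgfA0 n (n * (n + 1) / 2) G).PosDef ∧
      ∀ j : Fin n, (hgfAj n (n * (n + 1) / 2) G j).IsSymm :=
  hgf_first_order_reduction_symmetric_hyperbolic_general n G hGpos
end
end
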